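/- Let n ≥ 1 and m ∈ ℝ. There exists a constant C > 0 such that for every real R ≥ 2 and every integer k with 2 ≤ k ≤ R, one has ∑_{ℓ ∈ ℤ^n, R√(1−1/k) ≤ |ℓ| ≤ R} (1+|ℓ|²)^{m/2} ≤ C R^{m+n} / k. -/

import Mathlib

open scoped BigOperators

/-- The embedding of the lattice `ℤ^n` into `ℝ^n`. -/
def latt {n : ℕ} (ℓ : Fin n → ℤ) : Fin n → ℝ := fun i => (ℓ i : ℝ)

/-- The Euclidean norm on `ℝ^n`. -/
noncomputable def enorm' {n : ℕ} (x : Fin n → ℝ) : ℝ := Real.sqrt (∑ i, x i ^ 2)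

open MeasureTheory Metric Set
open scoped ENNReal

/-!
Each lattice point `ℓ` with `a ≤ |ℓ| ≤ b` owns the unit cube `ℓ + [0,1)ⁿ`, of diameter `√n`.
These cubes are disjoint and lie in the shell `a - √n ≤ |x| ≤ b + √n`, so the number of such
lattice points is at most the volume of the shell, which is `O(bⁿ⁻¹ (b - a + √n))`. For
`a = R √(1 - 1/k)` the width `R - a` is at most `R / k ≥ 1`, so the annulus holds `O(Rⁿ / k)`
lattice points, and on it `1 + |ℓ|²` lies between `R² / 2` and `2 R²`, so every term is `O(Rᵐ)`.
-/

variable {n : ℕ}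

lemma enorm'_eq_norm (x : Fin n → ℝ) : enorm' x = ‖WithLp.toLp 2 x‖ := by
  simp [enorm', EuclideanSpace.norm_eq]

lemma abs_le_enorm' (x : Fin n → ℝ) (i : Fin n) : |x i| ≤ enorm' x := by
  simpa [enorm'_eq_norm] using PiLp.norm_apply_le (WithLp.toLp 2 x) i

lemma enorm'_latt_sq (ℓ : Fin n → ℤ) : enorm' (latt ℓ) ^ 2 = ∑ i, (ℓ i : ℝ) ^ 2 :=
  Real.sq_sqrt (Finset.sum_nonneg fun _ _ => sq_nonneg _)

variable (n) in
def latticeAnnulus (a b : ℝ) : Set (Fin n → ℤ) :=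
  {ℓ | a ≤ enorm' (latt ℓ) ∧ enorm' (latt ℓ) ≤ b}

lemma finite_latticeAnnulus (a b : ℝ) : (latticeAnnulus n a b).Finite := by
  refine (isCompact_closedBall (0 : Fin n → ℤ) (max b 0)).finite_of_discrete.subset fun ℓ hℓ => ?_
  rw [mem_closedBall_zero_iff, pi_norm_le_iff_of_nonneg (le_max_right b 0)]
  intro i
  rw [Int.norm_eq_abs]
  exact ((abs_le_enorm' (latt ℓ) i).trans hℓ.2).trans (le_max_left b 0)

def unitCube (ℓ : Fin n → ℤ) : Set (EuclideanSpace ℝ (Fin n)) :=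
  WithLp.ofLp ⁻¹' univ.pi fun i => Ico (ℓ i : ℝ) (ℓ i + 1)

lemma measurableSet_unitCube (ℓ : Fin n → ℤ) : MeasurableSet (unitCube ℓ) :=
  (MeasurableEquiv.toLp 2 (Fin n → ℝ)).symm.measurable
    (MeasurableSet.univ_pi fun _ => measurableSet_Ico)

lemma volume_unitCube (ℓ : Fin n → ℤ) : volume (unitCube ℓ) = 1 := by
  have hcube : MeasurableSet (univ.pi fun i => Ico (ℓ i : ℝ) (ℓ i + 1)) :=
    MeasurableSet.univ_pi fun _ => measurableSet_Ico
  exact ((EuclideanSpace.volume_preserving_symm_measurableEquiv_toLp (Fin n)).measure_preimage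
    hcube.nullMeasurableSet).trans (by simp [volume_pi_pi])

lemma pairwise_disjoint_unitCube : Pairwise (Function.onFun Disjoint (unitCube (n := n))) := by
  intro ℓ ℓ' hne
  refine disjoint_left.2 fun x hx hx' => hne (funext fun i => ?_)
  rw [← Int.floor_eq_iff.2 (hx i (mem_univ i)), Int.floor_eq_iff.2 (hx' i (mem_univ i))]

lemma dist_le_sqrt_of_mem_unitCube {ℓ : Fin n → ℤ} {x : EuclideanSpace ℝ (Fin n)}
    (hx : x ∈ unitCube ℓ) : dist x (WithLp.toLp 2 (latt ℓ)) ≤ √n := by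
  rw [EuclideanSpace.dist_eq]
  gcongr
  calc ∑ i, dist (x i) (latt ℓ i) ^ 2 ≤ ∑ _i : Fin n, (1 : ℝ) := by
        gcongr with i
        obtain ⟨h₁, h₂⟩ := hx i (mem_univ i)
        rw [Real.dist_eq, sq_abs, latt]
        nlinarith
    _ = n := by simp

lemma unitCube_subset_annulus {a b : ℝ} {ℓ : Fin n → ℤ} (hℓ : ℓ ∈ latticeAnnulus n a b) :
    unitCube ℓ ⊆ closedBall 0 (b + √n) \ ball 0 (max (a - √n) 0) := by
  intro x hx
  have hdist := dist_le_sqrt_of_mem_unitCube hx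
  have hnorm := abs_le.1 (abs_norm_sub_norm_le x (WithLp.toLp 2 (latt ℓ)))
  obtain ⟨ha, hb⟩ := hℓ
  rw [← dist_eq_norm] at hnorm
  rw [enorm'_eq_norm] at ha hb
  simp only [mem_sdiff, mem_closedBall_zero_iff, mem_ball_zero_iff, not_lt, max_le_iff]
  exact ⟨by linarith, by linarith, norm_nonneg x⟩

lemma ncard_latticeAnnulus_add_volume_ball_le {a b : ℝ} (hab : a ≤ b) (hb : 0 ≤ b) :
    ((latticeAnnulus n a b).ncard : ℝ≥0∞) + volume (ball (0 : EuclideanSpace ℝ (Fin n))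
      (max (a - √n) 0)) ≤ volume (closedBall (0 : EuclideanSpace ℝ (Fin n)) (b + √n)) := by
  have hfin := finite_latticeAnnulus (n := n) a b
  have hcubes : volume (⋃ ℓ ∈ hfin.toFinset, unitCube ℓ) = hfin.toFinset.card := by
    rw [measure_biUnion_finset (pairwise_disjoint_unitCube.set_pairwise _)
      fun ℓ _ => measurableSet_unitCube ℓ]
    simp [volume_unitCube]
  have hsub : ∀ ℓ ∈ hfin.toFinset,
      unitCube ℓ ⊆ closedBall 0 (b + √n) \ ball 0 (max (a - √n) 0) :=
    fun ℓ hℓ => unitCube_subset_annulus (hfin.mem_toFinset.1 hℓ)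
  have hdisj : Disjoint (⋃ ℓ ∈ hfin.toFinset, unitCube ℓ) (ball 0 (max (a - √n) 0)) :=
    disjoint_left.2 fun x hx => (iUnion₂_subset hsub hx).2
  have hball : ball (0 : EuclideanSpace ℝ (Fin n)) (max (a - √n) 0) ⊆ closedBall 0 (b + √n) :=
    ball_subset_closedBall.trans (closedBall_subset_closedBall
      (max_le (by linarith [Real.sqrt_nonneg n]) (by positivity)))
  calc ((latticeAnnulus n a b).ncard : ℝ≥0∞) + volume (ball (0 : EuclideanSpace ℝ (Fin n))
        (max (a - √n) 0))
      = volume ((⋃ ℓ ∈ hfin.toFinset, unitCube ℓ) ∪ ball 0 (max (a - √n) 0)) := by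
        rw [measure_union hdisj measurableSet_ball, hcubes, ncard_eq_toFinset_card _ hfin]
    _ ≤ volume (closedBall (0 : EuclideanSpace ℝ (Fin n)) (b + √n)) :=
        measure_mono (union_subset (iUnion₂_subset fun ℓ hℓ => (hsub ℓ hℓ).trans
          sdiff_subset) hball)

lemma ncard_latticeAnnulus_le_volume_sub {a b : ℝ} (hn : 0 < n) (hab : a ≤ b) (hb : 0 ≤ b) :
    ((latticeAnnulus n a b).ncard : ℝ) ≤ volume.real (ball (0 : EuclideanSpace ℝ (Fin n)) 1) *
      ((b + √n) ^ n - max (a - √n) 0 ^ n) := by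
  have : Nonempty (Fin n) := ⟨⟨0, hn⟩⟩
  have h := ncard_latticeAnnulus_add_volume_ball_le (n := n) hab hb
  rw [Measure.addHaar_ball _ _ (le_max_right _ _),
    Measure.addHaar_closedBall _ _ (by positivity), finrank_euclideanSpace_fin] at h
  have h' := ENNReal.toReal_mono (by finiteness) h
  rw [ENNReal.toReal_add (by finiteness) (by finiteness)] at h'
  simp only [ENNReal.toReal_natCast, ENNReal.toReal_mul, ← measureReal_def,
    ENNReal.toReal_ofReal (by positivity : (0 : ℝ) ≤ max (a - √n) 0 ^ n),
    ENNReal.toReal_ofReal (by positivity : (0 : ℝ) ≤ (b + √n) ^ n)] at h'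
  linarith

lemma ncard_latticeAnnulus_le {a b : ℝ} (hn : 0 < n) (hab : a ≤ b) (hb : 0 ≤ b) :
    ((latticeAnnulus n a b).ncard : ℝ) ≤ volume.real (ball (0 : EuclideanSpace ℝ (Fin n)) 1) *
      n * (b + √n) ^ (n - 1) * (b - a + 2 * √n) := by
  set r := max (a - √n) 0
  have hr : 0 ≤ r := le_max_right _ _
  have hrb : r ≤ b + √n := max_le (by linarith [Real.sqrt_nonneg n]) (by positivity)
  have hgap := abs_pow_sub_pow_le (b + √n) r n
  rw [abs_of_nonneg (sub_nonneg.2 (pow_le_pow_left₀ hr hrb n)), abs_of_nonneg (sub_nonneg.2 hrb),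
    abs_of_nonneg (by positivity), abs_of_nonneg hr, max_eq_left hrb] at hgap
  calc ((latticeAnnulus n a b).ncard : ℝ)
      ≤ volume.real (ball (0 : EuclideanSpace ℝ (Fin n)) 1) * ((b + √n) ^ n - r ^ n) :=
        ncard_latticeAnnulus_le_volume_sub hn hab hb
    _ ≤ volume.real (ball (0 : EuclideanSpace ℝ (Fin n)) 1) *
          ((b + √n - r) * n * (b + √n) ^ (n - 1)) := by gcongr
    _ ≤ volume.real (ball (0 : EuclideanSpace ℝ (Fin n)) 1) *
          ((b - a + 2 * √n) * n * (b + √n) ^ (n - 1)) := by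
        gcongr
        linarith [le_max_left (a - √n) 0]
    _ = _ := by ring

lemma exists_ncard_latticeAnnulus_le (hn : 0 < n) :
    ∃ D > 0, ∀ a R w : ℝ, a ≤ R → 1 ≤ R → 1 ≤ w → R - a ≤ w →
      ((latticeAnnulus n a R).ncard : ℝ) ≤ D * R ^ (n - 1) * w := by
  have : Nonempty (Fin n) := ⟨⟨0, hn⟩⟩
  have hc : 0 < volume.real (ball (0 : EuclideanSpace ℝ (Fin n)) 1) :=
    ENNReal.toReal_pos (measure_ball_pos _ _ one_pos).ne' measure_ball_lt_top.ne
  refine ⟨volume.real (ball (0 : EuclideanSpace ℝ (Fin n)) 1) * n * (1 + √n) ^ (n - 1) *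
    (1 + 2 * √n), by positivity, fun a R w haR hR hw hRa => ?_⟩
  calc ((latticeAnnulus n a R).ncard : ℝ)
      ≤ volume.real (ball (0 : EuclideanSpace ℝ (Fin n)) 1) * n * (R + √n) ^ (n - 1) *
          (R - a + 2 * √n) := ncard_latticeAnnulus_le hn haR (by linarith)
    _ ≤ volume.real (ball (0 : EuclideanSpace ℝ (Fin n)) 1) * n * ((1 + √n) * R) ^ (n - 1) *
          ((1 + 2 * √n) * w) := by
        have hsn := Real.sqrt_nonneg n
        gcongr
        · nlinarith
        · nlinarith
    _ = _ := by rw [mul_pow]; ring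

lemma rpow_le_abs_rpow_mul_rpow {c x y : ℝ} (p : ℝ) (hx : 0 < x) (hc : 1 ≤ c)
    (h₁ : x ≤ c * y) (h₂ : y ≤ c * x) : y ^ p ≤ c ^ |p| * x ^ p := by
  rcases le_total 0 p with hp | hp
  · have hy : 0 < y := pos_of_mul_pos_right (hx.trans_le h₁) (by linarith)
    calc y ^ p ≤ (c * x) ^ p := by gcongr
      _ = c ^ |p| * x ^ p := by rw [Real.mul_rpow (by positivity) hx.le, abs_of_nonneg hp]
  · have hc0 : 0 < c := by linarith
    calc y ^ p ≤ (x / c) ^ p :=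
          Real.rpow_le_rpow_of_nonpos (by positivity) ((div_le_iff₀' hc0).2 h₁) hp
      _ = c ^ |p| * x ^ p := by
        rw [Real.div_rpow hx.le hc0.le, abs_of_nonpos hp, Real.rpow_neg hc0.le]; ring

lemma one_add_sq_rpow_le_of_mem_latticeAnnulus {a R : ℝ} (m : ℝ) (ha : 0 ≤ a) (hR : 1 ≤ R)
    (haR : R ^ 2 ≤ 2 * a ^ 2) {ℓ : Fin n → ℤ} (hℓ : ℓ ∈ latticeAnnulus n a R) :
    (1 + ∑ i, (ℓ i : ℝ) ^ 2) ^ (m / 2) ≤ 2 ^ |m / 2| * R ^ m := by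
  obtain ⟨hlow, hup⟩ := hℓ
  have hlow' : a ^ 2 ≤ ∑ i, (ℓ i : ℝ) ^ 2 := enorm'_latt_sq ℓ ▸ pow_le_pow_left₀ ha hlow 2
  have hup' : ∑ i, (ℓ i : ℝ) ^ 2 ≤ R ^ 2 :=
    enorm'_latt_sq ℓ ▸ pow_le_pow_left₀ (ha.trans hlow) hup 2
  have hRm : (R ^ 2) ^ (m / 2) = R ^ m := by
    rw [← Real.rpow_natCast, ← Real.rpow_mul (by positivity)]; ring_nf
  rw [← hRm]
  exact rpow_le_abs_rpow_mul_rpow _ (by positivity) one_le_two (by linarith) (by nlinarith)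

lemma tsum_subtype_le_ncard_mul {α : Type*} {s : Set α} (hs : s.Finite) {f : α → ℝ} {B : ℝ}
    (hf : ∀ x ∈ s, f x ≤ B) : ∑' x : s, f x ≤ s.ncard * B := by
  rw [← hs.coe_toFinset, Finset.tsum_subtype', ncard_coe_finset, ← nsmul_eq_mul]
  exact Finset.sum_le_card_nsmul _ _ _ fun x hx => hf x (hs.mem_toFinset.1 hx)

lemma sub_mul_sqrt_one_sub_le (R : ℝ) {t : ℝ} (hR : 0 ≤ R) (ht : 0 ≤ t) :
    R - R * √(1 - t) ≤ R * t := by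
  have : 1 - t ≤ √(1 - t) := Real.le_sqrt_self_iff.2 (by linarith)
  nlinarith

lemma sq_le_two_mul_sq_mul_sqrt_one_sub_inv (R : ℝ) {k : ℝ} (hk : 2 ≤ k) :
    R ^ 2 ≤ 2 * (R * √(1 - 1 / k)) ^ 2 := by
  have : 1 / k ≤ 1 / 2 := one_div_le_one_div_of_le two_pos hk
  rw [mul_pow, Real.sq_sqrt (by linarith)]
  nlinarith [sq_nonneg R]

/-- The lattice sum of `⟨ℓ⟩^m` over the thin annulus `R√(1 - 1/k) ≤ |ℓ| ≤ R` is bounded by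
`C R^{m+n} / k`, uniformly in `R ≥ 2` and `2 ≤ k ≤ R`. -/
theorem thin_annulus_lattice_sum (n : ℕ) (hn : 1 ≤ n) (m : ℝ) :
    ∃ C > 0, ∀ R : ℝ, 2 ≤ R → ∀ k : ℕ, 2 ≤ k → (k : ℝ) ≤ R →
      (∑' ℓ : {ℓ : Fin n → ℤ //
          R * Real.sqrt (1 - 1 / (k : ℝ)) ≤ enorm' (latt ℓ) ∧ enorm' (latt ℓ) ≤ R},
          ((1 : ℝ) + ∑ i, ((ℓ : Fin n → ℤ) i : ℝ) ^ 2) ^ (m / 2))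
        ≤ C * R ^ (m + (n : ℝ)) / (k : ℝ) := by
  obtain ⟨D, hD, hcount⟩ := exists_ncard_latticeAnnulus_le hn
  refine ⟨2 ^ |m / 2| * D, by positivity, fun R hR k hk hkR => ?_⟩
  have hk₂ : (2 : ℝ) ≤ k := by exact_mod_cast hk
  set a := R * √(1 - 1 / (k : ℝ))
  have haR : a ≤ R :=
    mul_le_of_le_one_right (by linarith) (Real.sqrt_le_one.2 (sub_le_self _ (by positivity)))
  have hwidth : R - a ≤ R / k :=
    (mul_one_div R k) ▸ sub_mul_sqrt_one_sub_le R (by linarith) (by positivity)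
  have hterm : ∀ ℓ ∈ latticeAnnulus n a R,
      (1 + ∑ i, (ℓ i : ℝ) ^ 2) ^ (m / 2) ≤ 2 ^ |m / 2| * R ^ m := fun ℓ hℓ =>
    one_add_sq_rpow_le_of_mem_latticeAnnulus m (by positivity) (by linarith)
      (sq_le_two_mul_sq_mul_sqrt_one_sub_inv R hk₂) hℓ
  calc _ ≤ (latticeAnnulus n a R).ncard * (2 ^ |m / 2| * R ^ m) :=
        tsum_subtype_le_ncard_mul (finite_latticeAnnulus a R) hterm
    _ ≤ D * R ^ (n - 1) * (R / k) * (2 ^ |m / 2| * R ^ m) := by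
        gcongr
        exact hcount a R (R / k) haR (by linarith)
          ((one_le_div (by linarith)).2 hkR) hwidth
    _ = _ := by
        rw [Real.rpow_add (by linarith), Real.rpow_natCast,
          ← pow_sub_one_mul (show n ≠ 0 by omega) R]
        ring
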